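/- Sampling construction for the L-distribution: if ε_x ~ N(0,1) and ε_h ~ Uniform(0,1) are independent and s ∈ {−1, +1} is an independent fair sign, then x = μ + s·σ·√(−2 log ε_h + ε_x²) has density q_L(x;μ,σ) = (x−μ)²/(√(2π)σ³)·exp(−(x−μ)²/(2σ²)). -/

import Mathlib

open Real MeasureTheory ProbabilityTheory

noncomputable def qL (μ σ x : ℝ) : ℝ :=
  (x - μ)^2 / (Real.sqrt (2 * π) * σ^3) * Real.exp (-(x - μ)^2 / (2 * σ^2))

/-- Joint law of (ε_x, ε_h, s): standard Gaussian × Uniform(0,1) × fair sign. -/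
noncomputable def jointLaw : Measure (ℝ × ℝ × ℝ) :=
  (gaussianReal 0 1).prod
    ((volume.restrict (Set.Ioo (0:ℝ) 1)).prod
      ((2:ENNReal)⁻¹ • (Measure.dirac (1:ℝ) + Measure.dirac (-1:ℝ))))

/-!
Let `φ` be the standard normal density and `R = √(-2 log ε_h + ε_x²)`. For `ε_x = x` and
`a ≥ 0`, `R ≤ a` iff `ε_h ≥ exp ((x² - a²) / 2)`, and `φ x * exp ((x² - a²) / 2) = φ a`, so
`P (R ≤ a) = ∫_{-a}^{a} (φ x - φ a) dx = ∫_0^a 2 r² φ r dr` (both sides vanish at `a = 0` and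
have derivative `2 a² φ a`). Hence `R` has the Maxwell density `2 r² φ r` on `r ≥ 0`; the fair
sign symmetrises it to `r² φ r`, and the affine map `r ↦ μ + σ r` turns that into `q_L`.
-/

open Set

open scoped ENNReal

namespace MeasureTheory.Measure

lemma map_prod_smul_dirac_add_dirac {α β γ : Type*} [MeasurableSpace α] [MeasurableSpace β]
    [MeasurableSpace γ] (ν : Measure α) [SFinite ν] (c : ℝ≥0∞) (b₁ b₂ : β)
    {f : α × β → γ} (hf : Measurable f) :
    (ν.prod (c • (dirac b₁ + dirac b₂))).map f
      = c • (ν.map (fun a => f (a, b₁)) + ν.map (fun a => f (a, b₂))) := by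
  rw [prod_smul_right, prod_add, prod_dirac, prod_dirac, Measure.map_smul,
    Measure.map_add _ _ hf, map_map hf measurable_prodMk_right,
    map_map hf measurable_prodMk_right]
  rfl

end MeasureTheory.Measure

lemma MeasurableEquiv.map_withDensity {α β : Type*} [MeasurableSpace α] [MeasurableSpace β]
    (μ : Measure α) (e : α ≃ᵐ β) (f : α → ℝ≥0∞) :
    (μ.withDensity f).map e = (μ.map e).withDensity (f ∘ e.symm) := by
  ext s hs
  rw [e.map_apply, withDensity_apply _ (e.measurable hs), withDensity_apply _ hs,
    e.restrict_map, lintegral_map_equiv]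
  simp

namespace Real

lemma map_volume_const_add_mul {c : ℝ} (hc : c ≠ 0) (m : ℝ) :
    (volume : Measure ℝ).map (fun r => m + c * r) = ENNReal.ofReal |c⁻¹| • volume := by
  have : (fun r : ℝ => m + c * r) = (m + ·) ∘ (c * ·) := rfl
  rw [this, ← Measure.map_map (measurable_const_add m) (measurable_const_mul c),
    map_volume_mul_left hc, Measure.map_smul, map_add_left_eq_self]

lemma map_withDensity_const_add_mul {c : ℝ} (hc : c ≠ 0) (m : ℝ) (f : ℝ → ℝ≥0∞) :
    (volume.withDensity f).map (fun r => m + c * r)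
      = volume.withDensity (fun x => ENNReal.ofReal |c⁻¹| * f ((x - m) / c)) := by
  let e : ℝ ≃ᵐ ℝ :=
    ((Homeomorph.mulLeft₀ c hc).trans (Homeomorph.addLeft m)).toMeasurableEquiv
  have he : (e : ℝ → ℝ) = fun r => m + c * r := rfl
  have he_symm (x : ℝ) : e.symm x = (x - m) / c := by
    rw [e.symm_apply_eq, he]
    field_simp
    ring
  rw [← he, e.map_withDensity, he, map_volume_const_add_mul hc, withDensity_smul_measure,
    ← withDensity_smul' _ _ (by simp)]
  simp only [Function.comp_def, he_symm, abs_inv]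
  rfl

end Real

namespace ProbabilityTheory

lemma gaussianPDFReal_zero_one (x : ℝ) :
    gaussianPDFReal 0 1 x = (√(2 * π))⁻¹ * rexp (-x ^ 2 / 2) := by
  simp [gaussianPDFReal]

lemma continuous_gaussianPDFReal_zero_one : Continuous (gaussianPDFReal 0 1) := by
  simp_rw [funext gaussianPDFReal_zero_one]
  fun_prop

lemma gaussianPDFReal_zero_one_neg (x : ℝ) :
    gaussianPDFReal 0 1 (-x) = gaussianPDFReal 0 1 x := by
  simp [gaussianPDFReal_zero_one]

lemma gaussianPDFReal_zero_one_mul_exp (x a : ℝ) :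
    gaussianPDFReal 0 1 x * rexp ((x ^ 2 - a ^ 2) / 2) = gaussianPDFReal 0 1 a := by
  rw [gaussianPDFReal_zero_one, gaussianPDFReal_zero_one, mul_assoc, ← Real.exp_add]
  congr 2
  ring

lemma gaussianPDFReal_zero_one_le_iff {x a : ℝ} :
    gaussianPDFReal 0 1 a ≤ gaussianPDFReal 0 1 x ↔ x ^ 2 ≤ a ^ 2 := by
  rw [gaussianPDFReal_zero_one, gaussianPDFReal_zero_one,
    mul_le_mul_iff_of_pos_left (by positivity), Real.exp_le_exp]
  constructor <;> intro h <;> linarith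

lemma hasDerivAt_gaussianPDFReal_zero_one (x : ℝ) :
    HasDerivAt (gaussianPDFReal 0 1) (-x * gaussianPDFReal 0 1 x) x := by
  simp_rw [funext gaussianPDFReal_zero_one]
  refine (((hasDerivAt_pow 2 x).neg.div_const 2).exp.const_mul (√(2 * π))⁻¹).congr_deriv ?_
  simp only [Pi.neg_apply]
  ring

lemma integral_gaussianPDFReal_zero_one_sub (a : ℝ) :
    ∫ x in -a..a, (gaussianPDFReal 0 1 x - gaussianPDFReal 0 1 a)
      = ∫ r in 0..a, 2 * r ^ 2 * gaussianPDFReal 0 1 r := by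
  set φ := gaussianPDFReal 0 1
  have hφ : Continuous φ := continuous_gaussianPDFReal_zero_one
  have hprimitive (b : ℝ) : HasDerivAt (fun u => ∫ x in (0 : ℝ)..u, φ x) (φ b) b :=
    (hφ.integral_hasStrictDerivAt 0 b).hasDerivAt
  have hderiv (b : ℝ) : HasDerivAt
      (fun b => (∫ x in (0 : ℝ)..b, φ x) - (∫ x in (0 : ℝ)..(-b), φ x) - 2 * b * φ b)
      (2 * b ^ 2 * φ b) b := by
    refine (((hprimitive b).sub ((hprimitive (-b)).comp b (hasDerivAt_neg b))).sub
      ((hasDerivAt_id b).const_mul 2 |>.mul (hasDerivAt_gaussianPDFReal_zero_one b))).congr_deriv ?_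
    simp only [φ, gaussianPDFReal_zero_one_neg, id]
    ring
  rw [intervalIntegral.integral_eq_sub_of_hasDerivAt (fun b _ => hderiv b)
    ((by fun_prop : Continuous fun r => 2 * r ^ 2 * φ r).intervalIntegrable _ _),
    intervalIntegral.integral_sub (hφ.intervalIntegrable _ _) intervalIntegrable_const,
    intervalIntegral.integral_const, intervalIntegral.integral_interval_sub_left
    (hφ.intervalIntegrable _ _) (hφ.intervalIntegrable _ _)]
  simp only [neg_zero, intervalIntegral.integral_same, smul_eq_mul]
  ring

lemma volume_Ioo_sqrt_neg_two_log_add_sq_le (x : ℝ) {a : ℝ} (ha : 0 ≤ a) :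
    volume.restrict (Ioo (0 : ℝ) 1) {h | √(-2 * Real.log h + x ^ 2) ≤ a}
      = ENNReal.ofReal (1 - rexp ((x ^ 2 - a ^ 2) / 2)) := by
  have hset : {h | √(-2 * Real.log h + x ^ 2) ≤ a} ∩ Ioo 0 1
      = Ico (rexp ((x ^ 2 - a ^ 2) / 2)) 1 := by
    ext h
    simp only [mem_inter_iff, mem_ofPred_eq, mem_Ioo, mem_Ico, Real.sqrt_le_left ha]
    constructor
    · rintro ⟨hle, h0, h1⟩
      refine ⟨?_, h1⟩
      rw [← Real.le_log_iff_exp_le h0]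
      linarith
    · rintro ⟨hle, h1⟩
      have h0 : 0 < h := (Real.exp_pos _).trans_le hle
      rw [← Real.le_log_iff_exp_le h0] at hle
      exact ⟨by linarith, h0, h1⟩
  rw [Measure.restrict_apply' measurableSet_Ioo, hset, Real.volume_Ico]

lemma lintegral_gaussianReal_one_sub_exp {a : ℝ} (ha : 0 ≤ a) :
    ∫⁻ x, ENNReal.ofReal (1 - rexp ((x ^ 2 - a ^ 2) / 2)) ∂gaussianReal 0 1
      = ENNReal.ofReal (∫ x in -a..a, (gaussianPDFReal 0 1 x - gaussianPDFReal 0 1 a)) := by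
  set φ := gaussianPDFReal 0 1
  have hsupport : (fun x => ENNReal.ofReal (φ x - φ a)).support ⊆ Ioc (-a) a := by
    intro x hx
    rw [Function.mem_support, ENNReal.ofReal_ne_zero_iff, sub_pos] at hx
    have : x ^ 2 < a ^ 2 := by
      by_contra! h
      exact hx.not_ge (gaussianPDFReal_zero_one_le_iff.mpr h)
    exact ⟨by nlinarith, by nlinarith⟩
  have hnonneg : ∀ x ∈ Ioc (-a) a, 0 ≤ φ x - φ a := fun x hx =>
    sub_nonneg.mpr (gaussianPDFReal_zero_one_le_iff.mpr (sq_le_sq' hx.1.le hx.2))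
  calc ∫⁻ x, ENNReal.ofReal (1 - rexp ((x ^ 2 - a ^ 2) / 2)) ∂gaussianReal 0 1
      = ∫⁻ x, ENNReal.ofReal (φ x - φ a) := by
        rw [gaussianReal_of_var_ne_zero 0 one_ne_zero,
          lintegral_withDensity_eq_lintegral_mul _ (measurable_gaussianPDF 0 1) (by fun_prop)]
        refine lintegral_congr fun x => ?_
        rw [Pi.mul_apply, gaussianPDF, ← ENNReal.ofReal_mul (gaussianPDFReal_nonneg _ _ _),
          mul_sub, mul_one, gaussianPDFReal_zero_one_mul_exp]
    _ = ∫⁻ x in Ioc (-a) a, ENNReal.ofReal (φ x - φ a) :=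
        (setLIntegral_eq_of_support_subset hsupport).symm
    _ = ENNReal.ofReal (∫ x in -a..a, (φ x - φ a)) := by
        rw [intervalIntegral.integral_of_le (by linarith),
          ofReal_integral_eq_lintegral_ofReal _ ((ae_restrict_iff' measurableSet_Ioc).mpr
            (ae_of_all _ hnonneg))]
        exact (continuous_gaussianPDFReal_zero_one.sub continuous_const).integrableOn_Ioc

noncomputable def maxwellPDFReal (r : ℝ) : ℝ :=
  (Ici 0).indicator (fun r => 2 * r ^ 2 * gaussianPDFReal 0 1 r) r

@[fun_prop]
lemma measurable_maxwellPDFReal : Measurable maxwellPDFReal :=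
  (by fun_prop : Measurable fun r => 2 * r ^ 2 * gaussianPDFReal 0 1 r).indicator measurableSet_Ici

lemma maxwellPDFReal_nonneg (r : ℝ) : 0 ≤ maxwellPDFReal r :=
  indicator_nonneg (fun r _ => by have := gaussianPDFReal_nonneg 0 1 r; positivity) r

lemma maxwellPDFReal_add_neg (r : ℝ) :
    maxwellPDFReal r + maxwellPDFReal (-r) = 2 * r ^ 2 * gaussianPDFReal 0 1 r := by
  rcases lt_trichotomy r 0 with hr | rfl | hr
  · simp [maxwellPDFReal, hr.not_ge, hr.le, gaussianPDFReal_zero_one_neg]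
  · simp [maxwellPDFReal]
  · simp [maxwellPDFReal, hr.le, hr]

lemma integrable_maxwellPDFReal : Integrable maxwellPDFReal := by
  refine Integrable.indicator ?_ measurableSet_Ici
  have h := (integrable_rpow_mul_exp_neg_mul_sq (by norm_num : (0 : ℝ) < 1 / 2)
    (by norm_num : (-1 : ℝ) < 2)).const_mul (2 * (√(2 * π))⁻¹)
  refine h.congr (ae_of_all _ fun r => ?_)
  simp only [Real.rpow_two, gaussianPDFReal_zero_one]
  ring_nf

lemma withDensity_maxwellPDFReal_Iic {a : ℝ} (ha : 0 ≤ a) :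
    volume.withDensity (fun r => ENNReal.ofReal (maxwellPDFReal r)) (Iic a)
      = ENNReal.ofReal (∫ r in 0..a, 2 * r ^ 2 * gaussianPDFReal 0 1 r) := by
  rw [withDensity_apply _ measurableSet_Iic, ← ofReal_integral_eq_lintegral_ofReal
    integrable_maxwellPDFReal.integrableOn (ae_of_all _ maxwellPDFReal_nonneg)]
  simp only [maxwellPDFReal]
  rw [integral_indicator measurableSet_Ici, Measure.restrict_restrict measurableSet_Ici,
    Ici_inter_Iic, integral_Icc_eq_integral_Ioc, intervalIntegral.integral_of_le ha]

lemma map_sqrt_neg_two_log_add_sq :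
    ((gaussianReal 0 1).prod (volume.restrict (Ioo (0 : ℝ) 1))).map
        (fun q => √(-2 * Real.log q.2 + q.1 ^ 2))
      = volume.withDensity (fun r => ENNReal.ofReal (maxwellPDFReal r)) := by
  have hR : Measurable fun q : ℝ × ℝ => √(-2 * Real.log q.2 + q.1 ^ 2) := by fun_prop
  have : IsFiniteMeasure (volume.withDensity fun r => ENNReal.ofReal (maxwellPDFReal r)) :=
    isFiniteMeasure_withDensity_ofReal integrable_maxwellPDFReal.2
  refine Measure.ext_of_Iic _ _ fun a => ?_
  rw [Measure.map_apply hR measurableSet_Iic]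
  rcases lt_or_ge a 0 with ha | ha
  · have hempty : (fun q : ℝ × ℝ => √(-2 * Real.log q.2 + q.1 ^ 2)) ⁻¹' Iic a = ∅ :=
      eq_empty_of_forall_notMem fun q hq => (Real.sqrt_nonneg _).not_gt (hq.trans_lt ha)
    have hzero : EqOn (fun r => ENNReal.ofReal (maxwellPDFReal r)) 0 (Iic a) := fun r hr => by
      simp [maxwellPDFReal, (hr.trans_lt ha).not_ge]
    rw [hempty, measure_empty, withDensity_apply _ measurableSet_Iic,
      setLIntegral_eq_zero measurableSet_Iic hzero]
  · have hsection (x : ℝ) : volume.restrict (Ioo (0 : ℝ) 1)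
        (Prod.mk x ⁻¹' ((fun q : ℝ × ℝ => √(-2 * Real.log q.2 + q.1 ^ 2)) ⁻¹' Iic a))
          = ENNReal.ofReal (1 - rexp ((x ^ 2 - a ^ 2) / 2)) :=
      volume_Ioo_sqrt_neg_two_log_add_sq_le x ha
    rw [Measure.prod_apply (hR measurableSet_Iic), lintegral_congr hsection,
      lintegral_gaussianReal_one_sub_exp ha, integral_gaussianPDFReal_zero_one_sub,
      withDensity_maxwellPDFReal_Iic ha]

end ProbabilityTheory

lemma qL_eq_mul_gaussianPDFReal (μ : ℝ) {σ : ℝ} (hσ : σ ≠ 0) (x : ℝ) :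
    qL μ σ x = σ⁻¹ * (((x - μ) / σ) ^ 2 * gaussianPDFReal 0 1 ((x - μ) / σ)) := by
  rw [qL, gaussianPDFReal_zero_one, div_pow,
    show -((x - μ) ^ 2 / σ ^ 2) / 2 = -(x - μ) ^ 2 / (2 * σ ^ 2) by ring]
  field_simp

lemma qL_eq_maxwellPDFReal (μ : ℝ) {σ : ℝ} (hσ : σ ≠ 0) (x : ℝ) :
    qL μ σ x = 2⁻¹ * (σ⁻¹ * (maxwellPDFReal ((x - μ) / σ) + maxwellPDFReal (-((x - μ) / σ)))) := by
  rw [qL_eq_mul_gaussianPDFReal μ hσ, maxwellPDFReal_add_neg]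
  ring

theorem L_distribution_sampling (σ : ℝ) (hσ : 0 < σ) (μ : ℝ) :
    Measure.map
        (fun p : ℝ × ℝ × ℝ =>
          μ + p.2.2 * σ * Real.sqrt (-2 * Real.log p.2.1 + p.1^2))
        jointLaw
      = volume.withDensity (fun x => ENNReal.ofReal (qL μ σ x)) := by
  set R : ℝ × ℝ → ℝ := fun q => √(-2 * Real.log q.2 + q.1 ^ 2)
  set ρ := ((gaussianReal 0 1).prod (volume.restrict (Ioo (0 : ℝ) 1))).map R
  have hR : Measurable R := by fun_prop
  have hsign : jointLaw.map (fun p : ℝ × ℝ × ℝ => μ + p.2.2 * σ * √(-2 * Real.log p.2.1 + p.1 ^ 2))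
      = (2 : ℝ≥0∞)⁻¹ • (ρ.map (fun r => μ + σ * r) + ρ.map (fun r => μ + -σ * r)) := by
    rw [jointLaw, ← Measure.prodAssoc_prod, Measure.map_map (by fun_prop) (by fun_prop),
      Measure.map_prod_smul_dirac_add_dirac _ _ _ _ (by fun_prop),
      Measure.map_map (by fun_prop) hR, Measure.map_map (by fun_prop) hR]
    congr 3 <;> funext q <;> simp [R, MeasurableEquiv.prodAssoc]
  rw [hsign, show ρ = _ from map_sqrt_neg_two_log_add_sq, Real.map_withDensity_const_add_mul hσ.ne',
    Real.map_withDensity_const_add_mul (neg_ne_zero.mpr hσ.ne'),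
    ← withDensity_add_left (by fun_prop), ← withDensity_smul _ (by fun_prop)]
  congr 1
  funext x
  rw [qL_eq_maxwellPDFReal μ hσ.ne', ENNReal.ofReal_mul (by norm_num),
    ENNReal.ofReal_mul (by positivity),
    ENNReal.ofReal_add (maxwellPDFReal_nonneg _) (maxwellPDFReal_nonneg _),
    ENNReal.ofReal_inv_of_pos two_pos, ENNReal.ofReal_ofNat]
  simp only [Pi.smul_apply, Pi.add_apply, smul_eq_mul, div_neg, inv_neg, abs_neg, abs_inv,
    abs_of_pos hσ, mul_add]
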